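/- Limit of the Nested Softmax Edge Selector (auxiliary claim in the proof of Proposition 'Good_Properties_Uncrossable'): Let B ∈ ℕ₊ with B ≥ 2 and let i, j ∈ [B]₊ be distinct. Then lim_{η→∞} SM( η · ( (1 − SM(η e_i)) ⊙ SM(η e_j) ) )_j = 1, where ⊙ is the componentwise product; explicitly, the j-th coordinate equals exp(η·e^η(e^η+B−2)/(e^η+B−1)²) divided by [ exp(η·(B−1)/(e^η+B−1)²) + exp(η·e^η(e^η+B−2)/(e^η+B−1)²) + (B−2)·exp(η·(e^η+B−2)/(e^η+B−1)²) ], and this quantity tends to 1 as η → ∞. Consequently, SM( η·((1 − SM(η e_i)) ⊙ SM(η e_j)) ) converges to e_j in ℓ¹ as η → ∞. -/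

import Mathlib

/-!
Write `x = η((1 − SM(η e_i)) ⊙ SM(η e_j))` and `S = e^η + B − 1`, so that `SM(η e_i)` has
entries `e^η/S` at `i` and `1/S` elsewhere. Then `x_j = η(1 − 1/S)(e^η/S) = η(1 + o(1))`, while
every other coordinate satisfies `x_m ≤ η · SM(η e_j)_m = η/S = o(η)`. Hence `x_j − x_m → ∞` for
all `m ≠ j`, which forces `SM(x)_j → 1`; as `SM(x)` is a probability vector, its `ℓ¹` distance
to `e_j` is `2(1 − SM(x)_j)`.
-/

open Filter

noncomputable def softmax {n : ℕ} (w : Fin n → ℝ) : Fin n → ℝ :=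
  fun i => Real.exp (w i) / ∑ j, Real.exp (w j)

/-- The nested softmax edge selector `SM(η((1 − SM(η e_i)) ⊙ SM(η e_j)))`. -/
noncomputable def nestedSel (B : ℕ) (η : ℝ) (i j : Fin B) : Fin B → ℝ :=
  softmax (fun m =>
    η * ((1 - softmax (η • (Pi.single i 1 : Fin B → ℝ)) m) *
          softmax (η • (Pi.single j 1 : Fin B → ℝ)) m))

open Real Topology

theorem Fintype.sum_eq_add_add_card_sub_two_mul {ι R : Type*} [Fintype ι] [CommRing R]
    {f : ι → R} {i j : ι} (hij : i ≠ j) {c : R} (hc : ∀ k, k ≠ i → k ≠ j → f k = c) :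
    ∑ k, f k = f i + f j + ((Fintype.card ι : R) - 2) * c := by
  have hcompl : ∑ k, (f k - c) = (f i - c) + (f j - c) :=
    Fintype.sum_eq_add i j hij fun k ⟨hi, hj⟩ => sub_eq_zero.mpr (hc k hi hj)
  rw [Finset.sum_sub_distrib, Finset.sum_const, Finset.card_univ, nsmul_eq_mul] at hcompl
  linear_combination hcompl

theorem sum_abs_sub_single_eq {ι : Type*} [Fintype ι] [DecidableEq ι] {p : ι → ℝ}
    (hp : ∀ m, 0 ≤ p m) (hsum : ∑ m, p m = 1) (j : ι) :
    ∑ m, |p m - (Pi.single j 1 : ι → ℝ) m| = 2 * (1 - p j) := by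
  have hpj : p j ≤ 1 := hsum ▸ Finset.single_le_sum (fun m _ => hp m) (Finset.mem_univ j)
  have hrest : ∑ m ∈ {j}ᶜ, |p m - (Pi.single j 1 : ι → ℝ) m| = ∑ m ∈ {j}ᶜ, p m :=
    Finset.sum_congr rfl fun m hm => by
      rw [Pi.single_eq_of_ne (by simpa using hm), sub_zero, abs_of_nonneg (hp m)]
  rw [Fintype.sum_eq_add_sum_compl j, hrest, Pi.single_eq_same, abs_of_nonpos (by linarith)]
  rw [Fintype.sum_eq_add_sum_compl j] at hsum
  linarith

section Softmax

variable {n : ℕ}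

theorem softmax_nonneg (w : Fin n → ℝ) (m : Fin n) : 0 ≤ softmax w m :=
  div_nonneg (exp_pos _).le (Finset.sum_nonneg fun _ _ => (exp_pos _).le)

theorem sum_softmax [NeZero n] (w : Fin n → ℝ) : ∑ m, softmax w m = 1 := by
  simp only [softmax, ← Finset.sum_div]
  exact div_self (Finset.sum_pos (fun k _ => exp_pos (w k)) Finset.univ_nonempty).ne'

theorem softmax_apply_eq_inv_sum_exp_sub (w : Fin n → ℝ) (j : Fin n) :
    softmax w j = (∑ k, exp (w k - w j))⁻¹ := by
  simp only [softmax, exp_sub, ← Finset.sum_div, inv_div]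

theorem tendsto_softmax_apply_nhds_one {α : Type*} {l : Filter α} {w : α → Fin n → ℝ}
    {j : Fin n} (h : ∀ k ≠ j, Tendsto (fun a => w a j - w a k) l atTop) :
    Tendsto (fun a => softmax (w a) j) l (𝓝 1) := by
  have hterm (k : Fin n) :
      Tendsto (fun a => exp (w a k - w a j)) l (𝓝 (if k = j then 1 else 0)) := by
    split_ifs with hk
    · simp [hk, tendsto_const_nhds]
    · have := tendsto_neg_atTop_atBot.comp (h k hk)
      simpa [Function.comp_def] using tendsto_exp_atBot.comp this
  have hsum := tendsto_finsetSum Finset.univ fun k _ => hterm k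
  simp only [Finset.sum_ite_eq', Finset.mem_univ, if_true] at hsum
  simpa [softmax_apply_eq_inv_sum_exp_sub] using hsum.inv₀ one_ne_zero

theorem softmax_smul_single_apply (η : ℝ) (i m : Fin n) :
    softmax (η • (Pi.single i 1 : Fin n → ℝ)) m =
      (if m = i then exp η else 1) / (exp η + n - 1) := by
  have hexp (k : Fin n) :
      exp ((η • (Pi.single i 1 : Fin n → ℝ)) k) = if k = i then exp η else 1 := by
    by_cases hk : k = i <;> simp [hk]
  have hsum : ∑ k : Fin n, (if k = i then exp η else 1) = exp η + n - 1 := by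
    rw [Fintype.sum_eq_add_sum_compl i, if_pos rfl,
      Finset.sum_congr rfl fun k hk => if_neg (by simpa using hk)]
    rw [Finset.sum_const, Finset.card_compl, Finset.card_singleton, Fintype.card_fin, nsmul_one,
      Nat.cast_sub i.pos, Nat.cast_one]
    ring
  simp only [softmax, hexp, hsum]

end Softmax

theorem exp_add_natCast_sub_one_pos {n : ℕ} (hn : 1 ≤ n) (η : ℝ) : 0 < exp η + n - 1 := by
  have : (1 : ℝ) ≤ n := by exact_mod_cast hn
  linarith [exp_pos η]

section NestedSelector

variable {B : ℕ} {η : ℝ} {i j m : Fin B}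

noncomputable def nestedLogit (B : ℕ) (η : ℝ) (i j : Fin B) (m : Fin B) : ℝ :=
  η * ((1 - softmax (η • (Pi.single i 1 : Fin B → ℝ)) m) *
    softmax (η • (Pi.single j 1 : Fin B → ℝ)) m)

theorem nestedSel_eq_softmax_nestedLogit :
    nestedSel B η i j = softmax (nestedLogit B η i j) := rfl

theorem nestedLogit_left (hij : i ≠ j) :
    nestedLogit B η i j i = η * ((B : ℝ) - 1) / (exp η + B - 1) ^ 2 := by
  have hS := (exp_add_natCast_sub_one_pos i.pos η).ne'
  rw [nestedLogit, softmax_smul_single_apply, softmax_smul_single_apply, if_pos rfl, if_neg hij]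
  field_simp
  ring

theorem nestedLogit_right (hij : i ≠ j) :
    nestedLogit B η i j j = η * (exp η * (exp η + B - 2)) / (exp η + B - 1) ^ 2 := by
  have hS := (exp_add_natCast_sub_one_pos i.pos η).ne'
  rw [nestedLogit, softmax_smul_single_apply, softmax_smul_single_apply, if_pos rfl,
    if_neg hij.symm]
  field_simp
  ring

theorem nestedLogit_of_ne (hi : m ≠ i) (hj : m ≠ j) :
    nestedLogit B η i j m = η * (exp η + B - 2) / (exp η + B - 1) ^ 2 := by
  have hS := (exp_add_natCast_sub_one_pos i.pos η).ne'
  rw [nestedLogit, softmax_smul_single_apply, softmax_smul_single_apply, if_neg hi, if_neg hj]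
  field_simp
  ring

theorem nestedLogit_le (hη : 0 ≤ η) (hm : m ≠ j) :
    nestedLogit B η i j m ≤ η * (exp η + B - 1)⁻¹ := by
  have hq : softmax (η • (Pi.single j 1 : Fin B → ℝ)) m = (exp η + B - 1)⁻¹ := by
    rw [softmax_smul_single_apply, if_neg hm, one_div]
  refine mul_le_mul_of_nonneg_left ?_ hη
  rw [← hq]
  exact mul_le_of_le_one_left (softmax_nonneg _ m)
    (sub_le_self 1 (softmax_nonneg (η • (Pi.single i 1 : Fin B → ℝ)) m))

theorem tendsto_nestedLogit_sub (hij : i ≠ j) (hm : m ≠ j) :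
    Tendsto (fun η => nestedLogit B η i j j - nestedLogit B η i j m) atTop atTop := by
  have hB : (1 : ℝ) ≤ B := by exact_mod_cast i.pos
  set u : ℝ → ℝ := fun η => (exp η + B - 1)⁻¹
  have hu : Tendsto u atTop (𝓝 0) :=
    tendsto_inv_atTop_zero.comp (tendsto_atTop_mono (fun η => by linarith) tendsto_exp_atTop)
  have hmargin : Tendsto (fun η => (1 - u η) * (1 - (B - 1) * u η) - u η) atTop (𝓝 1) := by
    have hcont : Continuous fun t : ℝ => (1 - t) * (1 - (B - 1) * t) - t := by fun_prop
    simpa [Function.comp_def] using (hcont.tendsto 0).comp hu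
  refine tendsto_atTop_mono' atTop ?_ (tendsto_id.atTop_mul_pos one_pos hmargin)
  filter_upwards [eventually_ge_atTop 0] with η hη
  have hS := (exp_add_natCast_sub_one_pos i.pos η).ne'
  have hj : nestedLogit B η i j j = η * ((1 - u η) * (1 - (B - 1) * u η)) := by
    rw [nestedLogit_right hij]
    simp only [u]
    field_simp
    ring
  rw [id, mul_sub, ← hj]
  linarith [nestedLogit_le (i := i) hη hm]

end NestedSelector

theorem nested_softmax_limit_general (B : ℕ) (i j : Fin B) (hij : i ≠ j) :
    (∀ η : ℝ,
      nestedSel B η i j j =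
        Real.exp (η * (Real.exp η * (Real.exp η + (B : ℝ) - 2)) /
            (Real.exp η + (B : ℝ) - 1) ^ 2) /
          (Real.exp (η * ((B : ℝ) - 1) / (Real.exp η + (B : ℝ) - 1) ^ 2) +
            Real.exp (η * (Real.exp η * (Real.exp η + (B : ℝ) - 2)) /
              (Real.exp η + (B : ℝ) - 1) ^ 2) +
            ((B : ℝ) - 2) *
              Real.exp (η * (Real.exp η + (B : ℝ) - 2) /
                (Real.exp η + (B : ℝ) - 1) ^ 2))) ∧
    Tendsto (fun η : ℝ => nestedSel B η i j j) atTop (nhds 1) ∧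
    Tendsto (fun η : ℝ =>
        ∑ m, |nestedSel B η i j m - (Pi.single j 1 : Fin B → ℝ) m|)
      atTop (nhds 0) := by
  have : NeZero B := ⟨j.pos.ne'⟩
  have hlimit : Tendsto (fun η => nestedSel B η i j j) atTop (𝓝 1) :=
    tendsto_softmax_apply_nhds_one fun m hm => tendsto_nestedLogit_sub hij hm
  refine ⟨fun η => ?_, hlimit, ?_⟩
  · have hsum := Fintype.sum_eq_add_add_card_sub_two_mul
      (f := fun m => exp (nestedLogit B η i j m)) hij
      fun m hi hj => congrArg exp (nestedLogit_of_ne hi hj)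
    rw [nestedSel_eq_softmax_nestedLogit, softmax, hsum, Fintype.card_fin, nestedLogit_left hij,
      nestedLogit_right hij]
  · have hl1 (η : ℝ) := sum_abs_sub_single_eq (p := nestedSel B η i j)
      (softmax_nonneg _) (sum_softmax _) j
    simp_rw [hl1]
    simpa using (hlimit.const_sub 1).const_mul 2

/-- **Limit of the nested softmax edge selector.** For `B ≥ 2` and distinct
`i, j`: the `j`-th coordinate of `SM(η((1 − SM(η e_i)) ⊙ SM(η e_j)))` has the
explicit form below, it tends to `1` as `η → ∞`, and consequently the selector
converges to `e_j` in `ℓ¹`. -/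
theorem nested_softmax_limit (B : ℕ) (hB : 2 ≤ B) (i j : Fin B) (hij : i ≠ j) :
    (∀ η : ℝ,
      nestedSel B η i j j =
        Real.exp (η * (Real.exp η * (Real.exp η + (B : ℝ) - 2)) /
            (Real.exp η + (B : ℝ) - 1) ^ 2) /
          (Real.exp (η * ((B : ℝ) - 1) / (Real.exp η + (B : ℝ) - 1) ^ 2) +
            Real.exp (η * (Real.exp η * (Real.exp η + (B : ℝ) - 2)) /
              (Real.exp η + (B : ℝ) - 1) ^ 2) +
            ((B : ℝ) - 2) *
              Real.exp (η * (Real.exp η + (B : ℝ) - 2) /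
                (Real.exp η + (B : ℝ) - 1) ^ 2))) ∧
    Tendsto (fun η : ℝ => nestedSel B η i j j) atTop (nhds 1) ∧
    Tendsto (fun η : ℝ =>
        ∑ m, |nestedSel B η i j m - (Pi.single j 1 : Fin B → ℝ) m|)
      atTop (nhds 0) :=
  nested_softmax_limit_general B i j hij
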